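/- arXiv:2409.02571 — 3 statements merged into one kernel-verified Lean document; each statement's English description precedes it below -/
import Mathlib

section
/- Let u, v, w be points of the d-dimensional Euclidean space (EuclideanSpace ℝ (Fin d)) with w ≠ u, and suppose ‖u − w‖ < ‖u − v‖ and that w does not prune the pair (u,v), i.e., it is not the case that both ‖u − w‖ < ‖u − v‖ and ‖v − w‖ < ‖u − v‖ hold. Then the inner product satisfies ⟪v − u, w − u⟫ < (1/2)·‖v − u‖·‖w − u‖; that is, the angle between the edge directions v − u and w − u exceeds 60 degrees. This makes precise the claim that edges retained after RNG pruning have diversified directions: a candidate edge is pruned whenever there exists a strictly shorter retained edge pointing in a similar direction. -/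
/-!
Since `w` does not prune `(u, v)`, `‖v - w‖ ≥ ‖v - u‖`; by the law of cosines this says
`2 ⟪v - u, w - u⟫ ≤ ‖w - u‖²`, which is `< ‖v - u‖ ‖w - u‖` because `0 < ‖w - u‖ < ‖v - u‖`.
-/

open scoped InnerProductSpace

section

variable {E : Type*} [NormedAddCommGroup E] [InnerProductSpace ℝ E]

theorem two_mul_inner_le_norm_sq_of_norm_le_norm_sub {x y : E} (h : ‖x‖ ≤ ‖x - y‖) :
    2 * ⟪x, y⟫_ℝ ≤ ‖y‖ ^ 2 := by
  have hsq : ‖x‖ ^ 2 ≤ ‖x - y‖ ^ 2 := pow_le_pow_left₀ (norm_nonneg x) h 2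
  rw [norm_sub_sq_real] at hsq
  linarith

theorem inner_lt_half_mul_norm_mul_norm_of_norm_le_norm_sub {x y : E} (hy : 0 < ‖y‖)
    (hyx : ‖y‖ < ‖x‖) (h : ‖x‖ ≤ ‖x - y‖) : ⟪x, y⟫_ℝ < 1 / 2 * ‖x‖ * ‖y‖ := by
  have hxy : 2 * ⟪x, y⟫_ℝ < ‖x‖ * ‖y‖ :=
    calc 2 * ⟪x, y⟫_ℝ ≤ ‖y‖ ^ 2 := two_mul_inner_le_norm_sq_of_norm_le_norm_sub h
      _ = ‖y‖ * ‖y‖ := sq _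
      _ < ‖x‖ * ‖y‖ := mul_lt_mul_of_pos_right hyx hy
  linarith

end

/-- If `w` is strictly closer to `u` than `v` is but `w` does not prune the pair
`(u,v)`, then the angle between the edge directions `v - u` and `w - u` exceeds
60 degrees: `⟪v - u, w - u⟫ < (1/2)·‖v - u‖·‖w - u‖`. -/
theorem rng_pruning_diversified_directions (d : ℕ)
    (u v w : EuclideanSpace ℝ (Fin d)) (hwu : w ≠ u)
    (hclose : ‖u - w‖ < ‖u - v‖)
    (hnotprune : ¬ (‖u - w‖ < ‖u - v‖ ∧ ‖v - w‖ < ‖u - v‖)) :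
    @inner ℝ _ _ (v - u) (w - u) < (1 / 2 : ℝ) * ‖v - u‖ * ‖w - u‖ := by
  have hfar : ‖v - u‖ ≤ ‖(v - u) - (w - u)‖ := by
    rw [sub_sub_sub_cancel_right, norm_sub_rev v u]
    exact le_of_not_gt fun h => hnotprune ⟨hclose, h⟩
  have hshorter : ‖w - u‖ < ‖v - u‖ := by rwa [norm_sub_rev w u, norm_sub_rev v u]
  exact inner_lt_half_mul_norm_mul_norm_of_norm_le_norm_sub
    (norm_pos_iff.mpr (sub_ne_zero.mpr hwu)) hshorter hfar
end

section
/- For k ≥ 1 and any 0 ≤ L ≤ R < 2^k, there exists a finite family of dyadic intervals of the segment tree over {0,1,...,2^k−1} that are pairwise disjoint, whose union is Icc(L,R) = {L, L+1, ..., R}, and whose cardinality is at most 2k. That is, every query range can be expressed as the disjoint union of O(log n) segments of the segment tree. -/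
/-- The level-`i`, index-`j` dyadic interval of the segment tree over `{0,...,2^k-1}`,
as a finset. -/
def dyadic (k i j : ℕ) : Finset ℕ := Finset.Ico (j * 2 ^ (k - i)) ((j + 1) * 2 ^ (k - i))

/-- Auxiliary predicate: `F` is a valid disjoint family of segments with union `S`. -/
def Good (k : ℕ) (F : Finset (ℕ × ℕ)) (S : Finset ℕ) : Prop :=
  (∀ p ∈ F, p.1 ≤ k ∧ p.2 < 2 ^ p.1) ∧
  (∀ p ∈ F, ∀ q ∈ F, p ≠ q → Disjoint (dyadic k p.1 p.2) (dyadic k q.1 q.2)) ∧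
  F.biUnion (fun p => dyadic k p.1 p.2) = S

lemma dyadic_subset {k i j : ℕ} (hik : i ≤ k) (hj : j < 2 ^ i) :
    dyadic k i j ⊆ Finset.Ico 0 (2 ^ k) := by
  intro x hx
  simp only [dyadic, Finset.mem_Ico] at hx ⊢
  refine ⟨Nat.zero_le _, lt_of_lt_of_le hx.2 ?_⟩
  calc (j + 1) * 2 ^ (k - i) ≤ 2 ^ i * 2 ^ (k - i) := Nat.mul_le_mul_right _ hj
    _ = 2 ^ k := by rw [← pow_add]; congr 1; omega

lemma good_subset {k : ℕ} {F : Finset (ℕ × ℕ)} {S : Finset ℕ} (h : Good k F S) :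
    S ⊆ Finset.Ico 0 (2 ^ k) := by
  obtain ⟨h1, _, h3⟩ := h
  rw [← h3]
  intro x hx
  rw [Finset.mem_biUnion] at hx
  obtain ⟨p, hp, hx⟩ := hx
  exact dyadic_subset (h1 p hp).1 (h1 p hp).2 hx

lemma dyadic_left (k i j : ℕ) : dyadic (k + 1) (i + 1) j = dyadic k i j := by
  simp [dyadic, Nat.succ_sub_succ]

lemma dyadic_right {k i : ℕ} (j : ℕ) (hik : i ≤ k) :
    dyadic (k + 1) (i + 1) (j + 2 ^ i) = (dyadic k i j).image (· + 2 ^ k) := by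
  have hpow : 2 ^ i * 2 ^ (k - i) = 2 ^ k := by rw [← pow_add]; congr 1; omega
  simp only [dyadic, Nat.succ_sub_succ, Finset.image_add_right_Ico]
  congr 1 <;> ring_nf <;> omega

lemma fL_inj : Function.Injective (fun p : ℕ × ℕ => (p.1 + 1, p.2)) := by
  intro p q h
  simp only [Prod.mk.injEq] at h
  exact Prod.ext (by omega) h.2

lemma fR_inj : Function.Injective (fun p : ℕ × ℕ => (p.1 + 1, p.2 + 2 ^ p.1)) := by
  intro p q h
  simp only [Prod.mk.injEq] at h
  obtain ⟨h1, h2⟩ := h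
  have : p.1 = q.1 := by omega
  exact Prod.ext this (by rw [this] at h2; omega)

lemma good_left {k : ℕ} {F : Finset (ℕ × ℕ)} {S : Finset ℕ} (h : Good k F S) :
    Good (k + 1) (F.image (fun p => (p.1 + 1, p.2))) S ∧
      (F.image (fun p => (p.1 + 1, p.2))).card = F.card := by
  obtain ⟨h1, h2, h3⟩ := h
  refine ⟨⟨?_, ?_, ?_⟩, Finset.card_image_of_injective _ fL_inj⟩
  · intro p hp
    rw [Finset.mem_image] at hp
    obtain ⟨q, hq, rfl⟩ := hp
    have hq1 := (h1 q hq).1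
    have hq2 := (h1 q hq).2
    refine ⟨by simp; omega, ?_⟩
    have : 2 ^ q.1 ≤ 2 ^ (q.1 + 1) := by rw [pow_succ]; omega
    simpa using lt_of_lt_of_le hq2 this
  · intro p hp q hq hne
    rw [Finset.mem_image] at hp hq
    obtain ⟨p', hp', rfl⟩ := hp
    obtain ⟨q', hq', rfl⟩ := hq
    simp only [dyadic_left]
    exact h2 p' hp' q' hq' (fun hc => hne (by rw [hc]))
  · rw [Finset.image_biUnion]
    simpa only [dyadic_left] using h3

lemma good_right {k : ℕ} {F : Finset (ℕ × ℕ)} {S : Finset ℕ} (h : Good k F S) :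
    Good (k + 1) (F.image (fun p => (p.1 + 1, p.2 + 2 ^ p.1))) (S.image (· + 2 ^ k)) ∧
      (F.image (fun p => (p.1 + 1, p.2 + 2 ^ p.1))).card = F.card := by
  obtain ⟨h1, h2, h3⟩ := h
  refine ⟨⟨?_, ?_, ?_⟩, Finset.card_image_of_injective _ fR_inj⟩
  · intro p hp
    rw [Finset.mem_image] at hp
    obtain ⟨q, hq, rfl⟩ := hp
    have := h1 q hq
    constructor
    · simp; omega
    · simp only [pow_succ]
      omega
  · intro p hp q hq hne
    rw [Finset.mem_image] at hp hq
    obtain ⟨p', hp', rfl⟩ := hp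
    obtain ⟨q', hq', rfl⟩ := hq
    rw [dyadic_right _ (h1 p' hp').1, dyadic_right _ (h1 q' hq').1]
    rw [Finset.disjoint_image (add_left_injective (2 ^ k))]
    exact h2 p' hp' q' hq' (fun hc => hne (by rw [hc]))
  · rw [Finset.image_biUnion, ← h3, Finset.biUnion_image]
    apply Finset.biUnion_congr rfl
    intro p hp
    exact dyadic_right _ (h1 p hp).1

lemma good_union {k : ℕ} {F G : Finset (ℕ × ℕ)} {S T : Finset ℕ}
    (hF : Good k F S) (hG : Good k G T) (hd : Disjoint S T) :
    Good k (F ∪ G) (S ∪ T) := by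
  obtain ⟨hF1, hF2, hF3⟩ := hF
  obtain ⟨hG1, hG2, hG3⟩ := hG
  have hsubF : ∀ p ∈ F, dyadic k p.1 p.2 ⊆ S := by
    intro p hp; rw [← hF3]; exact Finset.subset_biUnion_of_mem (fun p => dyadic k p.1 p.2) hp
  have hsubG : ∀ p ∈ G, dyadic k p.1 p.2 ⊆ T := by
    intro p hp; rw [← hG3]; exact Finset.subset_biUnion_of_mem (fun p => dyadic k p.1 p.2) hp
  refine ⟨?_, ?_, ?_⟩
  · intro p hp
    rcases Finset.mem_union.mp hp with h | h
    · exact hF1 p h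
    · exact hG1 p h
  · intro p hp q hq hne
    rcases Finset.mem_union.mp hp with hp' | hp' <;>
      rcases Finset.mem_union.mp hq with hq' | hq'
    · exact hF2 p hp' q hq' hne
    · exact hd.mono (hsubF p hp') (hsubG q hq')
    · exact (hd.mono (hsubF q hq') (hsubG p hp')).symm
    · exact hG2 p hp' q hq' hne
  · ext x
    simp only [Finset.mem_biUnion, Finset.mem_union, ← hF3, ← hG3]
    constructor
    · rintro ⟨p, hp | hp, hx⟩
      · exact Or.inl ⟨p, hp, hx⟩
      · exact Or.inr ⟨p, hp, hx⟩
    · rintro (⟨p, hp, hx⟩ | ⟨p, hp, hx⟩)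
      · exact ⟨p, Or.inl hp, hx⟩
      · exact ⟨p, Or.inr hp, hx⟩

lemma good_congr {k : ℕ} {F : Finset (ℕ × ℕ)} {S T : Finset ℕ} (h : Good k F S) (hST : S = T) :
    Good k F T := hST ▸ h

/-- prefix decomposition: `[0, R]` needs at most `k+1` segments. -/
lemma prefix_decomp : ∀ k R : ℕ, R < 2 ^ k →
    ∃ F : Finset (ℕ × ℕ), Good k F (Finset.Icc 0 R) ∧ F.card ≤ k + 1 := by
  intro k
  induction k with
  | zero =>
    intro R hR
    have : R = 0 := by omega
    subst this
    refine ⟨{(0, 0)}, ⟨?_, ?_, ?_⟩, by simp⟩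
    · intro p hp; simp at hp; subst hp; simp
    · intro p hp q hq hne; simp at hp hq; subst hp; subst hq; exact absurd rfl hne
    · ext x; simp [dyadic]
  | succ k ih =>
    intro R hR
    by_cases h : R < 2 ^ k
    · obtain ⟨F, hF, hc⟩ := ih R h
      obtain ⟨hg, hcard⟩ := good_left hF
      exact ⟨_, hg, by omega⟩
    · push_neg at h
      have hR2 : R - 2 ^ k < 2 ^ k := by
        have : 2 ^ (k + 1) = 2 * 2 ^ k := by ring
        omega
      obtain ⟨F, hF, hc⟩ := ih (R - 2 ^ k) hR2
      obtain ⟨hg, hcard⟩ := good_right hF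
      have himg : (Finset.Icc 0 (R - 2 ^ k)).image (· + 2 ^ k) = Finset.Icc (2 ^ k) R := by
        rw [Finset.image_add_right_Icc]
        congr 1 <;> omega
      rw [himg] at hg
      have hsingle : Good (k + 1) ({((1 : ℕ), (0 : ℕ))} : Finset (ℕ × ℕ))
          (Finset.Icc 0 (2 ^ k - 1)) := by
        refine ⟨?_, ?_, ?_⟩
        · intro p hp; simp at hp; subst hp; simp
        · intro p hp q hq hne; simp at hp hq; subst hp; subst hq; exact absurd rfl hne
        · ext x
          have hp : (0 : ℕ) < 2 ^ k := Nat.pow_pos (by norm_num)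
          simp [dyadic, Nat.succ_sub_succ]
          omega
      have hdisj : Disjoint (Finset.Icc 0 (2 ^ k - 1)) (Finset.Icc (2 ^ k) R) := by
        rw [Finset.disjoint_left]
        intro a ha hb
        simp only [Finset.mem_Icc] at ha hb
        have hp : (0 : ℕ) < 2 ^ k := Nat.pow_pos (by norm_num)
        omega
      have := good_union hsingle hg hdisj
      refine ⟨_, good_congr this ?_, ?_⟩
      · ext x
        have hp : (0 : ℕ) < 2 ^ k := Nat.pow_pos (by norm_num)
        simp only [Finset.mem_union, Finset.mem_Icc]
        omega
      · calc ({((1:ℕ),(0:ℕ))} ∪ F.image _).card ≤ 1 + (F.image _).card :=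
              Finset.card_union_le _ _
          _ ≤ k + 2 := by omega

/-- suffix decomposition: `[L, 2^k - 1]` needs at most `k+1` segments. -/
lemma suffix_decomp : ∀ k L : ℕ, L < 2 ^ k →
    ∃ F : Finset (ℕ × ℕ), Good k F (Finset.Icc L (2 ^ k - 1)) ∧ F.card ≤ k + 1 := by
  intro k
  induction k with
  | zero =>
    intro L hL
    have : L = 0 := by omega
    subst this
    refine ⟨{(0, 0)}, ⟨?_, ?_, ?_⟩, by simp⟩
    · intro p hp; simp at hp; subst hp; simp
    · intro p hp q hq hne; simp at hp hq; subst hp; subst hq; exact absurd rfl hne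
    · ext x; simp [dyadic]
  | succ k ih =>
    intro L hL
    have h2 : 2 ^ (k + 1) = 2 * 2 ^ k := by ring
    have hp0 : (0 : ℕ) < 2 ^ k := Nat.pow_pos (by norm_num)
    by_cases h : 2 ^ k ≤ L
    · obtain ⟨F, hF, hc⟩ := ih (L - 2 ^ k) (by omega)
      obtain ⟨hg, hcard⟩ := good_right hF
      have himg : (Finset.Icc (L - 2 ^ k) (2 ^ k - 1)).image (· + 2 ^ k)
          = Finset.Icc L (2 ^ (k + 1) - 1) := by
        rw [Finset.image_add_right_Icc]
        congr 1 <;> omega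
      rw [himg] at hg
      exact ⟨_, hg, by omega⟩
    · push_neg at h
      obtain ⟨F, hF, hc⟩ := ih L h
      obtain ⟨hg, hcard⟩ := good_left hF
      have hsingle : Good (k + 1) ({((1 : ℕ), (1 : ℕ))} : Finset (ℕ × ℕ))
          (Finset.Icc (2 ^ k) (2 ^ (k + 1) - 1)) := by
        refine ⟨?_, ?_, ?_⟩
        · intro p hp; simp at hp; subst hp; simp
        · intro p hp q hq hne; simp at hp hq; subst hp; subst hq; exact absurd rfl hne
        · ext x
          simp [dyadic, Nat.succ_sub_succ]
          omega
      have hdisj : Disjoint (Finset.Icc L (2 ^ k - 1)) (Finset.Icc (2 ^ k) (2 ^ (k + 1) - 1)) := by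
        rw [Finset.disjoint_left]
        intro a ha hb
        simp only [Finset.mem_Icc] at ha hb
        omega
      have := good_union hg hsingle hdisj
      refine ⟨_, good_congr this ?_, ?_⟩
      · ext x
        simp only [Finset.mem_union, Finset.mem_Icc]
        omega
      · calc (F.image _ ∪ {((1:ℕ),(1:ℕ))}).card ≤ (F.image _).card + 1 :=
              Finset.card_union_le _ _
          _ ≤ k + 2 := by omega

lemma general_decomp : ∀ k : ℕ, 1 ≤ k → ∀ L R : ℕ, L ≤ R → R < 2 ^ k →
    ∃ F : Finset (ℕ × ℕ), Good k F (Finset.Icc L R) ∧ F.card ≤ 2 * k := by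
  intro k
  induction k with
  | zero => omega
  | succ k ih =>
    intro _ L R hLR hR
    have h2 : 2 ^ (k + 1) = 2 * 2 ^ k := by ring
    have hp0 : (0 : ℕ) < 2 ^ k := Nat.pow_pos (by norm_num)
    by_cases hL0 : L = 0
    · subst hL0
      obtain ⟨F, hF, hc⟩ := prefix_decomp (k + 1) R hR
      exact ⟨F, hF, by omega⟩
    by_cases hRt : R = 2 ^ (k + 1) - 1
    · obtain ⟨F, hF, hc⟩ := suffix_decomp (k + 1) L (by omega)
      rw [← hRt] at hF
      exact ⟨F, hF, by omega⟩
    -- now 1 ≤ L, R < 2^(k+1) - 1, so k ≥ 1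
    have hk1 : 1 ≤ k := by
      rcases Nat.eq_zero_or_pos k with h | h
      · subst h; simp at h2 hR ⊢; omega
      · exact h
    by_cases hcase1 : R < 2 ^ k
    · obtain ⟨F, hF, hc⟩ := ih hk1 L R hLR hcase1
      obtain ⟨hg, hcard⟩ := good_left hF
      exact ⟨_, hg, by omega⟩
    push_neg at hcase1
    by_cases hcase2 : 2 ^ k ≤ L
    · obtain ⟨F, hF, hc⟩ := ih hk1 (L - 2 ^ k) (R - 2 ^ k) (by omega) (by omega)
      obtain ⟨hg, hcard⟩ := good_right hF
      have himg : (Finset.Icc (L - 2 ^ k) (R - 2 ^ k)).image (· + 2 ^ k)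
          = Finset.Icc L R := by
        rw [Finset.image_add_right_Icc]
        congr 1 <;> omega
      rw [himg] at hg
      exact ⟨_, hg, by omega⟩
    · push_neg at hcase2
      obtain ⟨F1, hF1, hc1⟩ := suffix_decomp k L hcase2
      obtain ⟨F2, hF2, hc2⟩ := prefix_decomp k (R - 2 ^ k) (by omega)
      obtain ⟨hg1, hcard1⟩ := good_left hF1
      obtain ⟨hg2, hcard2⟩ := good_right hF2
      have himg : (Finset.Icc 0 (R - 2 ^ k)).image (· + 2 ^ k) = Finset.Icc (2 ^ k) R := by
        rw [Finset.image_add_right_Icc]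
        congr 1 <;> omega
      rw [himg] at hg2
      have hdisj : Disjoint (Finset.Icc L (2 ^ k - 1)) (Finset.Icc (2 ^ k) R) := by
        rw [Finset.disjoint_left]
        intro a ha hb
        simp only [Finset.mem_Icc] at ha hb
        omega
      have := good_union hg1 hg2 hdisj
      refine ⟨_, good_congr this ?_, ?_⟩
      · ext x
        simp only [Finset.mem_union, Finset.mem_Icc]
        omega
      · calc (F1.image _ ∪ F2.image _).card ≤ (F1.image _).card + (F2.image _).card :=
              Finset.card_union_le _ _
          _ ≤ 2 * (k + 1) := by omega

/-- Every query range `Icc L R ⊆ {0,...,2^k-1}` is the disjoint union of at most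
`2k` segments of the segment tree. -/
theorem range_decomposition (k L R : ℕ) (hk : 1 ≤ k) (hLR : L ≤ R) (hR : R < 2 ^ k) :
    ∃ F : Finset (ℕ × ℕ),
      (∀ p ∈ F, p.1 ≤ k ∧ p.2 < 2 ^ p.1) ∧
      (∀ p ∈ F, ∀ q ∈ F, p ≠ q → Disjoint (dyadic k p.1 p.2) (dyadic k q.1 q.2)) ∧
      F.biUnion (fun p => dyadic k p.1 p.2) = Finset.Icc L R ∧
      F.card ≤ 2 * k := by
  obtain ⟨F, ⟨h1, h2, h3⟩, hc⟩ := general_decomp k hk L R hLR hR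
  exact ⟨F, h1, h2, h3, hc⟩
end

section
/- Let k ∈ ℕ and let Icc(L,R) with 0 ≤ L ≤ R < 2^k be a query range. Then the total number of active levels summed over all in-range points satisfies Σ_{u=L}^{R} N(u) ≤ 3·(R − L + 1). That is, on average each in-range object has O(1) active levels, which is the combinatorial core of the amortized O(m + log n) bound (Theorem 2) for the edge-selection algorithm that constructs the edges of a data object in the dedicated graph on the fly. -/
/-- The unique level-`i` dyadic interval containing `u`, namely `D(i, ⌊u/2^(k-i)⌋)`. -/
def seg (k i u : ℕ) : Finset ℕ := dyadic k i (u / 2 ^ (k - i))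

/-- The number of active levels for `u` with respect to the query range `Icc L R`:
levels `i < k` such that `s_i(u)` is not contained in `Icc L R` and
`s_i(u) ∩ Icc L R ≠ s_{i+1}(u) ∩ Icc L R`. -/
def numActive (k L R u : ℕ) : ℕ :=
  ((Finset.range k).filter (fun i =>
    ¬ seg k i u ⊆ Finset.Icc L R ∧
    seg k i u ∩ Finset.Icc L R ≠ seg k (i + 1) u ∩ Finset.Icc L R)).card

open Finset

lemma mem_seg {k i u x : ℕ} : x ∈ seg k i u ↔ x / 2 ^ (k - i) = u / 2 ^ (k - i) := by
  have := Nat.two_pow_pos (k - i)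
  rw [seg, dyadic, mem_Ico, Nat.div_eq_iff this, add_mul, one_mul]
  omega

lemma seg_subset_seg_zero (k i u : ℕ) : seg k i u ⊆ seg k 0 u := by
  intro x hx
  have hpow : 2 ^ k = 2 ^ (k - i) * 2 ^ (k - (k - i)) := by
    rw [← pow_add, Nat.add_sub_cancel' (Nat.sub_le k i)]
  rw [mem_seg] at hx ⊢
  rw [Nat.sub_zero, hpow, ← Nat.div_div_eq_div_mul, ← Nat.div_div_eq_div_mul, hx]

/- For `u ≥ 2 ^ k` the segments `seg k i u` form the tree over the block of `u`, a translate of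
`[0, 2 ^ k)`; this is what lets the induction on `k` run inside either half of a larger block. -/
lemma seg_zero_eq_Ico {k c u : ℕ} (hc : 2 ^ k ∣ c) (hu : u ∈ Ico c (c + 2 ^ k)) :
    seg k 0 u = Ico c (c + 2 ^ k) := by
  obtain ⟨t, rfl⟩ := hc
  rw [mem_Ico] at hu
  have hut : u / 2 ^ k = t :=
    Nat.div_eq_of_lt_le (by linarith [mul_comm t (2 ^ k)]) (by linarith [add_mul t 1 (2 ^ k)])
  rw [seg, dyadic, Nat.sub_zero, hut]
  congr 1 <;> ring

lemma seg_succ_succ (k i u : ℕ) : seg (k + 1) (i + 1) u = seg k i u := by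
  simp only [seg, dyadic, Nat.add_sub_add_right]

lemma numActive_zero (L R u : ℕ) : numActive 0 L R u = 0 := by
  simp [numActive]

lemma numActive_succ (k L R u : ℕ) :
    numActive (k + 1) L R u = numActive k L R u +
      if ¬ seg (k + 1) 0 u ⊆ Icc L R ∧
          seg (k + 1) 0 u ∩ Icc L R ≠ seg (k + 1) 1 u ∩ Icc L R then 1 else 0 := by
  rw [numActive, numActive, card_filter, card_filter, sum_range_succ']
  simp only [seg_succ_succ]

lemma numActive_succ_le (k L R u : ℕ) : numActive (k + 1) L R u ≤ numActive k L R u + 1 := by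
  rw [numActive_succ]
  split <;> omega

lemma numActive_succ_of_subset {k L R u : ℕ} (h : Icc L R ⊆ seg k 0 u) :
    numActive (k + 1) L R u = numActive k L R u := by
  have h1 : Icc L R ⊆ seg (k + 1) 1 u := seg_succ_succ k 0 u ▸ h
  have h0 : Icc L R ⊆ seg (k + 1) 0 u := h1.trans (seg_subset_seg_zero _ _ _)
  have hroot : seg (k + 1) 0 u ∩ Icc L R = seg (k + 1) 1 u ∩ Icc L R := by
    rw [inter_eq_right.mpr h0, inter_eq_right.mpr h1]
  rw [numActive_succ, if_neg fun hactive => hactive.2 hroot, add_zero]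

lemma numActive_eq_zero_of_subset {k L R u : ℕ} (h : seg k 0 u ⊆ Icc L R) :
    numActive k L R u = 0 := by
  rw [numActive, card_eq_zero, filter_eq_empty_iff]
  exact fun i _ hi => hi.1 ((seg_subset_seg_zero k i u).trans h)

lemma numActive_congr {k L R L' R' u : ℕ}
    (h : seg k 0 u ∩ Icc L R = seg k 0 u ∩ Icc L' R') :
    numActive k L R u = numActive k L' R' u := by
  have hinter : ∀ i, seg k i u ∩ Icc L R = seg k i u ∩ Icc L' R' := fun i => by
    rw [← inter_eq_left.mpr (seg_subset_seg_zero k i u), inter_assoc, h, inter_assoc]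
  have hsub : ∀ i, seg k i u ⊆ Icc L R ↔ seg k i u ⊆ Icc L' R' := fun i => by
    rw [← inter_eq_left, hinter, inter_eq_left]
  simp only [numActive, hinter, hsub]

variable {k c L R : ℕ}

lemma sum_Icc_split {M : Type*} [AddCommMonoid M] (f : ℕ → M) {m : ℕ} (hLm : L < m)
    (hmR : m ≤ R) :
    ∑ u ∈ Icc L R, f u = ∑ u ∈ Icc L (m - 1), f u + ∑ u ∈ Icc m R, f u := by
  rw [← sum_union (disjoint_left.mpr fun x hx hx' => by simp only [mem_Icc] at hx hx'; omega)]
  congr 1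
  ext x
  simp only [mem_union, mem_Icc]
  omega

lemma sum_numActive_succ_eq (hc : 2 ^ k ∣ c) (hL : c ≤ L) (hR : R < c + 2 ^ k) :
    ∑ u ∈ Icc L R, numActive (k + 1) L R u = ∑ u ∈ Icc L R, numActive k L R u := by
  refine sum_congr rfl fun u hu => numActive_succ_of_subset ?_
  rw [mem_Icc] at hu
  rw [seg_zero_eq_Ico hc (by rw [mem_Ico]; omega)]
  intro x hx
  simp only [mem_Icc, mem_Ico] at hx ⊢
  omega

lemma sum_numActive_succ_le_of_inter_eq {a b : ℕ} (hc : 2 ^ k ∣ c) (ha : c ≤ a)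
    (hb : b < c + 2 ^ k) (h : Ico c (c + 2 ^ k) ∩ Icc L R = Ico c (c + 2 ^ k) ∩ Icc a b) :
    ∑ u ∈ Icc a b, numActive (k + 1) L R u ≤
      ∑ u ∈ Icc a b, numActive k a b u + (b + 1 - a) := by
  rw [← Nat.card_Icc, card_eq_sum_ones, ← sum_add_distrib]
  refine sum_le_sum fun u hu => ?_
  rw [mem_Icc] at hu
  have hseg := seg_zero_eq_Ico hc (u := u) (by rw [mem_Ico]; omega)
  have hcongr : numActive k L R u = numActive k a b u := numActive_congr (by rw [hseg]; exact h)
  exact hcongr ▸ numActive_succ_le k L R u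

lemma sum_numActive_succ_le_of_Ico_subset (hc : 2 ^ k ∣ c) (h : Ico c (c + 2 ^ k) ⊆ Icc L R) :
    ∑ u ∈ Icc c (c + 2 ^ k - 1), numActive (k + 1) L R u ≤ 2 ^ k := by
  have hpos := Nat.two_pow_pos k
  calc ∑ u ∈ Icc c (c + 2 ^ k - 1), numActive (k + 1) L R u
      ≤ ∑ _u ∈ Icc c (c + 2 ^ k - 1), 1 := sum_le_sum fun u hu => by
        rw [mem_Icc] at hu
        have hzero := numActive_eq_zero_of_subset
          ((seg_zero_eq_Ico hc (u := u) (by rw [mem_Ico]; omega)).trans_subset h)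
        have := numActive_succ_le k L R u
        omega
    _ = 2 ^ k := by simp only [sum_const, Nat.card_Icc, smul_eq_mul, mul_one]; omega

theorem sum_numActive_le_of_left_aligned (hL : 2 ^ k ∣ L) (hR : R < L + 2 ^ k) :
    ∑ u ∈ Icc L R, numActive k L R u ≤ 2 * (R + 1 - L) := by
  induction k generalizing L with
  | zero => simp [numActive_zero]
  | succ k ih =>
    have hL' : 2 ^ k ∣ L := (pow_dvd_pow 2 k.le_succ).trans hL
    have hM : 2 ^ k ∣ L + 2 ^ k := dvd_add hL' dvd_rfl
    rw [pow_succ, mul_two] at hR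
    by_cases hsplit : R < L + 2 ^ k
    · rw [sum_numActive_succ_eq hL' le_rfl hsplit]
      exact ih hL' hsplit
    rw [sum_Icc_split _ (m := L + 2 ^ k) (by have := Nat.two_pow_pos k; omega) (by omega)]
    have hfull := sum_numActive_succ_le_of_Ico_subset (L := L) (R := R) hL'
      (fun x hx => by simp only [mem_Ico, mem_Icc] at hx ⊢; omega)
    have hright := sum_numActive_succ_le_of_inter_eq (L := L) (R := R) (b := R) hM le_rfl
      (by omega) (by ext x; simp only [mem_inter, mem_Ico, mem_Icc]; omega)
    have hright_ih := ih hM (by omega)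
    omega

theorem sum_numActive_le_of_right_aligned (hc : 2 ^ k ∣ c) (hL : c ≤ L)
    (hR : R + 1 = c + 2 ^ k) : ∑ u ∈ Icc L R, numActive k L R u ≤ 2 * (R + 1 - L) := by
  induction k generalizing c R with
  | zero => simp [numActive_zero]
  | succ k ih =>
    have hc' : 2 ^ k ∣ c := (pow_dvd_pow 2 k.le_succ).trans hc
    have hM : 2 ^ k ∣ c + 2 ^ k := dvd_add hc' dvd_rfl
    rw [pow_succ, mul_two] at hR
    by_cases hsplit : c + 2 ^ k ≤ L
    · rw [sum_numActive_succ_eq hM hsplit (by omega)]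
      exact ih hM hsplit (by omega)
    obtain rfl : R = c + 2 ^ k + 2 ^ k - 1 := by omega
    rw [sum_Icc_split _ (m := c + 2 ^ k) (by omega) (by omega)]
    have hleft := sum_numActive_succ_le_of_inter_eq (L := L) (R := c + 2 ^ k + 2 ^ k - 1)
      (b := c + 2 ^ k - 1) hc' hL (by omega)
      (by ext x; simp only [mem_inter, mem_Ico, mem_Icc]; omega)
    have hfull := sum_numActive_succ_le_of_Ico_subset (L := L) (R := c + 2 ^ k + 2 ^ k - 1) hM
      (fun x hx => by simp only [mem_Ico, mem_Icc] at hx ⊢; omega)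
    have hleft_ih := ih (R := c + 2 ^ k - 1) hc' hL (by omega)
    omega

theorem sum_numActive_le_of_same_block (hc : 2 ^ k ∣ c) (hL : c ≤ L) (hR : R < c + 2 ^ k) :
    ∑ u ∈ Icc L R, numActive k L R u ≤ 3 * (R + 1 - L) := by
  induction k generalizing c with
  | zero => simp [numActive_zero]
  | succ k ih =>
    have hc' : 2 ^ k ∣ c := (pow_dvd_pow 2 k.le_succ).trans hc
    have hM : 2 ^ k ∣ c + 2 ^ k := dvd_add hc' dvd_rfl
    rw [pow_succ, mul_two] at hR
    by_cases hlow : R < c + 2 ^ k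
    · rw [sum_numActive_succ_eq hc' hL hlow]
      exact ih hc' hL hlow
    by_cases hhigh : c + 2 ^ k ≤ L
    · rw [sum_numActive_succ_eq hM hhigh (by omega)]
      exact ih hM hhigh (by omega)
    rw [sum_Icc_split _ (m := c + 2 ^ k) (by omega) (by omega)]
    have hleft := sum_numActive_succ_le_of_inter_eq (L := L) (R := R) (b := c + 2 ^ k - 1)
      hc' hL (by omega) (by ext x; simp only [mem_inter, mem_Ico, mem_Icc]; omega)
    have hright := sum_numActive_succ_le_of_inter_eq (L := L) (R := R) (b := R) hM le_rfl
      (by omega) (by ext x; simp only [mem_inter, mem_Ico, mem_Icc]; omega)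
    have hsuffix := sum_numActive_le_of_right_aligned (R := c + 2 ^ k - 1) hc' hL (by omega)
    have hprefix := sum_numActive_le_of_left_aligned (R := R) hM (by omega)
    omega

theorem sum_numActive_le_general (k L R : ℕ) (hR : R < 2 ^ k) :
    ∑ u ∈ Finset.Icc L R, numActive k L R u ≤ 3 * (R - L + 1) :=
  (sum_numActive_le_of_same_block (dvd_zero _) L.zero_le (by rwa [zero_add])).trans (by omega)

/-- Summed over all in-range points, the total number of active levels is at
most `3·(R - L + 1)`: on average each in-range object has `O(1)` active levels. -/
theorem sum_numActive_le (k L R : ℕ) (hLR : L ≤ R) (hR : R < 2 ^ k) :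
    ∑ u ∈ Finset.Icc L R, numActive k L R u ≤ 3 * (R - L + 1) :=
  sum_numActive_le_general k L R hR
end
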